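/- Let G be a group acting by measurable automorphisms on a measurable space X. Then the following are equivalent: (1) there exists a G-invariant mean on B(X); (2) for every countable partition 𝒫 of X into measurable sets, every finite subset E ⊆ G, and every ε > 0, there exists a finitely supported function a : X → ℝ with a ≥ 0 and ‖a‖₁ = 1 such that ‖a − g·a‖_𝒫 ≤ ε for all g ∈ E. -/

import Mathlib

open scoped Pointwise

/-- A countable partition of a measurable space into measurable sets. -/
def IsCtblMeasPartition {X : Type*} [MeasurableSpace X] (Ps : Set (Set X)) : Prop :=
  Ps.Countable ∧ (∀ P ∈ Ps, MeasurableSet P) ∧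
  Ps.PairwiseDisjoint id ∧ ⋃₀ Ps = Set.univ

/-- The seminorm `‖a‖_Ps = Σ_{P ∈ Ps} |Σ_{x ∈ P} a x|` on finitely supported functions. -/
noncomputable def pnorm {X : Type*} (Ps : Set (Set X)) (a : X →₀ ℝ) : ℝ :=
  ∑' P : Ps, |∑ x ∈ a.support, (P : Set X).indicator (fun y => a y) x|

/-- A mean on the space of real-valued functions satisfying predicate `P`. -/
def IsMean {X : Type*} (P : (X → ℝ) → Prop) (μ : (X → ℝ) → ℝ) : Prop :=
  μ (fun _ => (1 : ℝ)) = 1 ∧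
  (∀ f, P f → (∀ x, 0 ≤ f x) → 0 ≤ μ f) ∧
  (∀ f g, P f → P g → μ (fun x => f x + g x) = μ f + μ g) ∧
  (∀ (c : ℝ) (f), P f → μ (fun x => c * f x) = c * μ f)

/-- `f` is bounded and measurable (an element of `B(X)`). -/
def IsBddMeas {X : Type*} [MeasurableSpace X] (f : X → ℝ) : Prop :=
  (∃ C, ∀ x, |f x| ≤ C) ∧ Measurable f

/-- `f` is bounded (an element of `ℓ∞(X)`). -/
def IsBdd {X : Type*} (f : X → ℝ) : Prop := ∃ C, ∀ x, |f x| ≤ C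

/-- The `ℓ¹`-norm of a finitely supported function. -/
def onenorm {X : Type*} (a : X →₀ ℝ) : ℝ := ∑ x ∈ a.support, |a x|

/-- The action of a group element on finitely supported functions:
`(g • a)(x) = a (g⁻¹ • x)`. -/
def fsAct {G X : Type*} [Group G] [MulAction G X] (g : G) (a : X →₀ ℝ) : X →₀ ℝ :=
  Finsupp.equivMapDomain (MulAction.toPerm g) a

/-!
(1) ⇒ (2): if Reiter's condition fails for `(𝒫, E, ε)`, the image of the probability vectors
under the linear map `a ↦ (a - g • a pushed forward to 𝒫)_{g ∈ E}` into `∏_{g ∈ E} ℓ¹(𝒫)` is a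
convex set at distance `≥ ε` from `0`. Hahn–Banach separates it from `0` by some
`h ∈ ℓ^∞(E × 𝒫)`, so that `x ↦ ∑_{g ∈ E} (h_g(𝒫(x)) - h_g(𝒫(g • x)))` is a bounded measurable
function `≥ u > 0` everywhere, while an invariant mean gives it mean `0`.

(2) ⇒ (1): let `μ f` be the limit of `∑ₓ a(x) f(x)` along an ultrafilter finer than all the Reiter
sets. A bounded measurable `f` lies within `δ` of a function constant on the pieces of the
partition `𝒬` into level sets `{⌊f / δ⌋ = k}`, so `|∑ₓ (g • a - a)(x) f(x)|` is at most
`‖f‖_∞ ‖a - g • a‖_𝒬 + 2δ`, which is small on Reiter sets for `(𝒬, {g}, ε)`.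
-/

open Finsupp Filter Topology

section L1

variable {X Y : Type*}

lemma linearCombination_add_fun {M : Type*} [AddCommGroup M] [Module ℝ M] (v w : X → M)
    (a : X →₀ ℝ) :
    linearCombination ℝ (fun x => v x + w x) a =
      linearCombination ℝ v a + linearCombination ℝ w a := by
  simp only [linearCombination_apply, smul_add, Finsupp.sum_add]

lemma linearCombination_const_mul_fun (c : ℝ) (v : X → ℝ) (a : X →₀ ℝ) :
    linearCombination ℝ (fun x => c * v x) a = c * linearCombination ℝ v a := by
  simp only [linearCombination_apply, Finsupp.mul_sum, smul_eq_mul, mul_left_comm]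

lemma norm_linearCombination_le {W : Type*} [SeminormedAddCommGroup W] [NormedSpace ℝ W]
    {v : X → W} {C : ℝ} {a : X →₀ ℝ} (hv : ∀ x ∈ a.support, ‖v x‖ ≤ C) :
    ‖linearCombination ℝ v a‖ ≤ C * onenorm a := by
  rw [linearCombination_apply, onenorm, Finset.mul_sum]
  refine (norm_sum_le _ _).trans (Finset.sum_le_sum fun x hx => ?_)
  rw [norm_smul, Real.norm_eq_abs, mul_comm]
  exact mul_le_mul_of_nonneg_right (hv x hx) (abs_nonneg _)

open Classical in
noncomputable def toL1 : (X →₀ ℝ) →ₗ[ℝ] lp (fun _ : X => ℝ) 1 :=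
  linearCombination ℝ fun x => lp.single 1 x 1

lemma norm_toL1 (a : X →₀ ℝ) : ‖toL1 a‖ = onenorm a := by
  classical
  have h := lp.norm_sum_single (E := fun _ : X => ℝ) (p := 1) (by simp) (fun x => a x) a.support
  simp only [ENNReal.toReal_one, Real.rpow_one, Real.norm_eq_abs] at h
  rw [onenorm, ← h, toL1, linearCombination_apply, Finsupp.sum]
  congr 2
  ext1 x
  rw [← lp.single_smul (𝕜 := ℝ), smul_eq_mul, mul_one]

lemma onenorm_sub_le (a b : X →₀ ℝ) : onenorm (a - b) ≤ onenorm a + onenorm b := by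
  simpa only [← norm_toL1, map_sub] using norm_sub_le (toL1 a) (toL1 b)

lemma onenorm_sub_comm (a b : X →₀ ℝ) : onenorm (a - b) = onenorm (b - a) := by
  simpa only [← norm_toL1, map_sub] using norm_sub_rev (toL1 a) (toL1 b)

lemma onenorm_single (x : X) (r : ℝ) : onenorm (single x r) = |r| := by
  classical
  rw [← norm_toL1, toL1, linearCombination_single, ← lp.single_smul (𝕜 := ℝ), smul_eq_mul,
    mul_one, lp.norm_single (by simp), Real.norm_eq_abs]

lemma onenorm_mapDomain_le (h : X → Y) (a : X →₀ ℝ) :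
    onenorm (mapDomain h a) ≤ onenorm a := by
  classical
  rw [← norm_toL1, toL1, linearCombination_mapDomain, ← one_mul (onenorm a)]
  exact norm_linearCombination_le fun x _ => by simp [lp.norm_single]

lemma onenorm_fsAct {G : Type*} [Group G] [MulAction G X] (g : G) (a : X →₀ ℝ) :
    onenorm (fsAct g a) = onenorm a := by
  simp only [onenorm, fsAct]
  exact (Finset.sum_map a.support _ _).trans (by simp)

lemma fsAct_eq_mapDomain {G : Type*} [Group G] [MulAction G X] (g : G) (a : X →₀ ℝ) :
    fsAct g a = mapDomain (g • ·) a :=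
  equivMapDomain_eq_mapDomain _ _

end L1

namespace IsCtblMeasPartition

variable {X : Type*} [MeasurableSpace X] {Ps Qs : Set (Set X)}

lemma exists_mem (hPs : IsCtblMeasPartition Ps) (x : X) : ∃ P ∈ Ps, x ∈ P :=
  Set.mem_sUnion.1 (hPs.2.2.2 ▸ Set.mem_univ x)

noncomputable def piece (hPs : IsCtblMeasPartition Ps) (x : X) : Ps :=
  ⟨(hPs.exists_mem x).choose, (hPs.exists_mem x).choose_spec.1⟩

lemma mem_piece (hPs : IsCtblMeasPartition Ps) (x : X) : x ∈ (hPs.piece x : Set X) :=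
  (hPs.exists_mem x).choose_spec.2

lemma eq_of_mem_of_mem (hPs : IsCtblMeasPartition Ps) {P Q : Set X} (hP : P ∈ Ps) (hQ : Q ∈ Ps)
    {x : X} (hxP : x ∈ P) (hxQ : x ∈ Q) : P = Q :=
  hPs.2.2.1.elim_set hP hQ x hxP hxQ

lemma piece_eq_of_mem (hPs : IsCtblMeasPartition Ps) {P : Ps} {x : X} (hx : x ∈ (P : Set X)) :
    hPs.piece x = P :=
  Subtype.ext (hPs.eq_of_mem_of_mem (hPs.piece x).2 P.2 (hPs.mem_piece x) hx)

lemma measurable_comp_piece (hPs : IsCtblMeasPartition Ps) {β : Type*} [MeasurableSpace β]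
    (k : Ps → β) : Measurable fun x => k (hPs.piece x) := by
  intro t _
  have hpre : (fun x => k (hPs.piece x)) ⁻¹' t = ⋃ P ∈ {P : Ps | k P ∈ t}, (P : Set X) := by
    ext x
    simp only [Set.mem_preimage, Set.mem_iUnion, Set.mem_ofPred_eq, exists_prop]
    exact ⟨fun h => ⟨_, h, hPs.mem_piece x⟩, fun ⟨P, hP, hx⟩ => hPs.piece_eq_of_mem hx ▸ hP⟩
  have : Countable Ps := hPs.1.to_subtype
  rw [hpre]
  exact MeasurableSet.biUnion (Set.to_countable _) fun P _ => hPs.2.1 P P.2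

lemma pnorm_eq_onenorm_mapDomain (hPs : IsCtblMeasPartition Ps) (b : X →₀ ℝ) :
    pnorm Ps b = onenorm (mapDomain hPs.piece b) := by
  classical
  have hcoord : ∀ P : Ps,
      ∑ x ∈ b.support, (P : Set X).indicator (fun y => b y) x = mapDomain hPs.piece b P := by
    intro P
    rw [mapDomain, Finsupp.sum_apply, Finsupp.sum]
    refine Finset.sum_congr rfl fun x _ => ?_
    rw [single_apply, Set.indicator_apply]
    refine if_congr ⟨fun hx => hPs.piece_eq_of_mem hx, ?_⟩ rfl rfl
    rintro rfl
    exact hPs.mem_piece x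
  rw [pnorm, tsum_congr fun P => congrArg abs (hcoord P), onenorm]
  exact tsum_eq_sum fun P hP => by rw [notMem_support_iff.1 hP, abs_zero]

lemma pnorm_sub_comm (hPs : IsCtblMeasPartition Ps) (a b : X →₀ ℝ) :
    pnorm Ps (a - b) = pnorm Ps (b - a) := by
  simp only [hPs.pnorm_eq_onenorm_mapDomain, mapDomain_sub, onenorm_sub_comm]

lemma pnorm_le_of_refines (hPs : IsCtblMeasPartition Ps) (hQs : IsCtblMeasPartition Qs)
    (href : ∀ Q ∈ Qs, ∃ P ∈ Ps, Q ⊆ P) (b : X →₀ ℝ) : pnorm Ps b ≤ pnorm Qs b := by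
  choose ρ hρPs hρ using href
  have hpiece : hPs.piece = (fun Q : Qs => (⟨ρ Q Q.2, hρPs Q Q.2⟩ : Ps)) ∘ hQs.piece :=
    funext fun x => hPs.piece_eq_of_mem (hρ _ _ (hQs.mem_piece x))
  rw [hPs.pnorm_eq_onenorm_mapDomain, hQs.pnorm_eq_onenorm_mapDomain, hpiece, mapDomain_comp]
  exact onenorm_mapDomain_le _ _

lemma abs_linearCombination_le (hPs : IsCtblMeasPartition Ps) {f : X → ℝ} {C δ : ℝ}
    (hC : ∀ x, |f x| ≤ C) (hosc : ∀ P ∈ Ps, ∀ x ∈ P, ∀ y ∈ P, |f x - f y| ≤ δ) (b : X →₀ ℝ) :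
    |linearCombination ℝ f b| ≤ C * pnorm Ps b + δ * onenorm b := by
  classical
  let k : Ps → ℝ := fun P => if h : (P : Set X).Nonempty then f h.some else 0
  have hk : ∀ x, ∃ y ∈ (hPs.piece x : Set X), k (hPs.piece x) = f y := fun x =>
    have hne : (hPs.piece x : Set X).Nonempty := ⟨x, hPs.mem_piece x⟩
    ⟨hne.some, hne.some_mem, dif_pos hne⟩
  have hsplit : linearCombination ℝ f b = linearCombination ℝ k (mapDomain hPs.piece b)
      + linearCombination ℝ (fun x => f x - k (hPs.piece x)) b := by
    rw [linearCombination_mapDomain, ← linearCombination_add_fun]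
    simp
  have hcoarse : ‖linearCombination ℝ k (mapDomain hPs.piece b)‖
      ≤ C * onenorm (mapDomain hPs.piece b) := by
    refine norm_linearCombination_le fun P hP => ?_
    obtain ⟨x, -, rfl⟩ := Finset.mem_image.1 (mapDomain_support hP)
    obtain ⟨y, -, hy⟩ := hk x
    rw [hy, Real.norm_eq_abs]
    exact hC y
  have hfine : ‖linearCombination ℝ (fun x => f x - k (hPs.piece x)) b‖ ≤ δ * onenorm b := by
    refine norm_linearCombination_le fun x _ => ?_
    obtain ⟨y, hy, hky⟩ := hk x
    rw [hky, Real.norm_eq_abs]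
    exact hosc _ (hPs.piece x).2 x (hPs.mem_piece x) y hy
  rw [hsplit, hPs.pnorm_eq_onenorm_mapDomain]
  exact (abs_add_le _ _).trans (add_le_add hcoarse hfine)

end IsCtblMeasPartition

section Constructions

variable {X : Type*} [MeasurableSpace X]

open scoped SetFamily in
lemma IsCtblMeasPartition.infs {Ps Qs : Set (Set X)} (hPs : IsCtblMeasPartition Ps)
    (hQs : IsCtblMeasPartition Qs) : IsCtblMeasPartition (Ps ⊼ Qs) := by
  refine ⟨hPs.1.image2 hQs.1 _, ?_, ?_, ?_⟩
  · rintro _ ⟨P, hP, Q, hQ, rfl⟩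
    exact (hPs.2.1 P hP).inter (hQs.2.1 Q hQ)
  · rintro _ ⟨P₁, hP₁, Q₁, hQ₁, rfl⟩ _ ⟨P₂, hP₂, Q₂, hQ₂, rfl⟩ hne
    refine Set.disjoint_left.2 fun x hx₁ hx₂ => hne ?_
    rw [hPs.eq_of_mem_of_mem hP₁ hP₂ hx₁.1 hx₂.1, hQs.eq_of_mem_of_mem hQ₁ hQ₂ hx₁.2 hx₂.2]
  · refine Set.eq_univ_of_forall fun x => Set.mem_sUnion.2 ?_
    exact ⟨_, Set.mem_image2_of_mem (hPs.piece x).2 (hQs.piece x).2,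
      hPs.mem_piece x, hQs.mem_piece x⟩

lemma isCtblMeasPartition_singleton_univ : IsCtblMeasPartition {(Set.univ : Set X)} :=
  ⟨Set.countable_singleton _, by simp, Set.pairwiseDisjoint_singleton _ _, Set.sUnion_singleton _⟩

lemma isCtblMeasPartition_range_preimage_singleton {Y : Type*} [Countable Y] [MeasurableSpace Y]
    [MeasurableSingletonClass Y] {φ : X → Y} (hφ : Measurable φ) :
    IsCtblMeasPartition (Set.range fun y => φ ⁻¹' {y}) := by
  refine ⟨Set.countable_range _, ?_, ?_, ?_⟩
  · rintro _ ⟨y, rfl⟩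
    exact hφ (measurableSet_singleton y)
  · rintro _ ⟨y, rfl⟩ _ ⟨z, rfl⟩ hne
    exact Disjoint.preimage φ (Set.disjoint_singleton.2 fun h => hne (h ▸ rfl))
  · exact Set.eq_univ_of_forall fun x => Set.mem_sUnion.2 ⟨_, ⟨φ x, rfl⟩, rfl⟩

lemma exists_isCtblMeasPartition_abs_sub_le {f : X → ℝ} (hf : Measurable f) {δ : ℝ}
    (hδ : 0 < δ) : ∃ Ps : Set (Set X), IsCtblMeasPartition Ps ∧
      ∀ P ∈ Ps, ∀ x ∈ P, ∀ y ∈ P, |f x - f y| ≤ δ := by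
  refine ⟨_, isCtblMeasPartition_range_preimage_singleton (hf.div_const δ).floor, ?_⟩
  rintro _ ⟨k, rfl⟩ x hx y hy
  have h := Int.abs_sub_lt_one_of_floor_eq_floor (hx.trans hy.symm)
  rw [← sub_div, abs_div, abs_of_pos hδ, div_lt_one hδ] at h
  exact h.le

end Constructions

section Simplex

variable {X : Type*}

def finsuppStdSimplex (X : Type*) : Set (X →₀ ℝ) := {a | (∀ x, 0 ≤ a x) ∧ onenorm a = 1}

lemma onenorm_eq_linearCombination_one {a : X →₀ ℝ} (ha : ∀ x, 0 ≤ a x) :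
    onenorm a = linearCombination ℝ (fun _ => (1 : ℝ)) a := by
  simp [onenorm, linearCombination_apply, Finsupp.sum, abs_of_nonneg (ha _)]

lemma single_one_mem_finsuppStdSimplex (x : X) : single x 1 ∈ finsuppStdSimplex X :=
  ⟨single_nonneg.2 zero_le_one, by simp [onenorm_single]⟩

lemma convex_finsuppStdSimplex : Convex ℝ (finsuppStdSimplex X) := by
  rintro a ⟨ha0, ha1⟩ b ⟨hb0, hb1⟩ s t hs ht hst
  have hnonneg : ∀ x, 0 ≤ (s • a + t • b) x := fun x => by
    simpa using add_nonneg (mul_nonneg hs (ha0 x)) (mul_nonneg ht (hb0 x))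
  refine ⟨hnonneg, ?_⟩
  rw [onenorm_eq_linearCombination_one hnonneg, map_add, map_smul, map_smul,
    ← onenorm_eq_linearCombination_one ha0, ← onenorm_eq_linearCombination_one hb0, ha1, hb1]
  simpa using hst

lemma abs_linearCombination_le_of_mem_finsuppStdSimplex {f : X → ℝ} {C : ℝ} (hC : ∀ x, |f x| ≤ C)
    {a : X →₀ ℝ} (ha : a ∈ finsuppStdSimplex X) : |linearCombination ℝ f a| ≤ C := by
  simpa [ha.2] using norm_linearCombination_le (v := f) (a := a) fun x _ => hC x

end Simplex

section ReiterFilter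

variable {G X : Type*} [Group G] [MulAction G X]

def reiterSet (Ps : Set (Set X)) (E : Finset G) (ε : ℝ) : Set (X →₀ ℝ) :=
  {a ∈ finsuppStdSimplex X | ∀ g ∈ E, pnorm Ps (a - fsAct g a) ≤ ε}

lemma reiterSet_subset_reiterSet [MeasurableSpace X] {Ps Qs : Set (Set X)}
    (hPs : IsCtblMeasPartition Ps) (hQs : IsCtblMeasPartition Qs)
    (href : ∀ Q ∈ Qs, ∃ P ∈ Ps, Q ⊆ P) {E F : Finset G} (hEF : E ⊆ F) {ε δ : ℝ} (hδε : δ ≤ ε) :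
    reiterSet Qs F δ ⊆ reiterSet Ps E ε := fun _ ⟨ha, haF⟩ =>
  ⟨ha, fun g hg => (hPs.pnorm_le_of_refines hQs href _).trans ((haF g (hEF hg)).trans hδε)⟩

variable (G X) [MeasurableSpace X]

def reiterFilter : Filter (X →₀ ℝ) :=
  ⨅ q : {q : Set (Set X) × Finset G × ℝ // IsCtblMeasPartition q.1 ∧ 0 < q.2.2},
    𝓟 (reiterSet q.1.1 q.1.2.1 q.1.2.2)

variable {G X}

lemma reiterSet_mem_reiterFilter {Ps : Set (Set X)} (hPs : IsCtblMeasPartition Ps)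
    (E : Finset G) {ε : ℝ} (hε : 0 < ε) : reiterSet Ps E ε ∈ reiterFilter G X :=
  mem_iInf_of_mem ⟨(Ps, E, ε), hPs, hε⟩ (mem_principal_self _)

lemma finsuppStdSimplex_mem_reiterFilter : finsuppStdSimplex X ∈ reiterFilter G X :=
  mem_of_superset (reiterSet_mem_reiterFilter isCtblMeasPartition_singleton_univ ∅ one_pos)
    fun _ ha => ha.1

open scoped SetFamily in
lemma reiterFilter_neBot
    (hR : ∀ Ps : Set (Set X), IsCtblMeasPartition Ps → ∀ (E : Finset G) (ε : ℝ), 0 < ε →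
      (reiterSet Ps E ε).Nonempty) :
    (reiterFilter G X).NeBot := by
  classical
  refine iInf_neBot_of_directed ?_ fun q => principal_neBot_iff.2 (hR _ q.2.1 _ _ q.2.2)
  rintro ⟨⟨Ps, E, ε⟩, hPs, hε⟩ ⟨⟨Qs, F, δ⟩, hQs, hδ⟩
  refine ⟨⟨(Ps ⊼ Qs, E ∪ F, min ε δ), hPs.infs hQs, lt_min hε hδ⟩,
    principal_mono.2 ?_, principal_mono.2 ?_⟩
  · refine reiterSet_subset_reiterSet hPs (hPs.infs hQs) ?_ Finset.subset_union_left
      (min_le_left ε δ)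
    rintro _ ⟨P, hP, Q, -, rfl⟩
    exact ⟨P, hP, Set.inter_subset_left⟩
  · refine reiterSet_subset_reiterSet hQs (hPs.infs hQs) ?_ Finset.subset_union_right
      (min_le_right ε δ)
    rintro _ ⟨P, -, Q, hQ, rfl⟩
    exact ⟨Q, hQ, Set.inter_subset_right⟩

lemma tendsto_linearCombination_fsAct_sub {f : X → ℝ} (hf : IsBddMeas f) (g : G) :
    Tendsto (fun a => linearCombination ℝ f (fsAct g a) - linearCombination ℝ f a)
      (reiterFilter G X) (𝓝 0) := by
  obtain ⟨⟨C, hC⟩, hfm⟩ := hf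
  have hC' : ∀ x, |f x| ≤ |C| := fun x => (hC x).trans (le_abs_self C)
  rw [Metric.tendsto_nhds]
  intro η hη
  obtain ⟨Qs, hQs, hosc⟩ := exists_isCtblMeasPartition_abs_sub_le hfm (δ := η / 4) (by positivity)
  set ε := η / 4 / (|C| + 1)
  have hε : |C| * ε ≤ η / 4 := by
    calc |C| * ε ≤ (|C| + 1) * ε := by gcongr; linarith
      _ = η / 4 := mul_div_cancel₀ _ (by positivity)
  filter_upwards [reiterSet_mem_reiterFilter hQs {g} (by positivity : 0 < ε)] with a ⟨ha, hag⟩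
  have hp : pnorm Qs (fsAct g a - a) ≤ ε := by
    rw [hQs.pnorm_sub_comm]
    exact hag g (Finset.mem_singleton_self g)
  have ho : onenorm (fsAct g a - a) ≤ 2 := by
    have := onenorm_sub_le (fsAct g a) a
    rw [onenorm_fsAct, ha.2] at this
    linarith
  rw [Real.dist_eq, sub_zero, ← map_sub]
  calc |linearCombination ℝ f (fsAct g a - a)|
      ≤ |C| * pnorm Qs (fsAct g a - a) + η / 4 * onenorm (fsAct g a - a) :=
        hQs.abs_linearCombination_le hC' hosc _
    _ ≤ |C| * ε + η / 4 * 2 := by gcongr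
    _ < η := by linarith

end ReiterFilter

section BddMeas

variable {X : Type*} [MeasurableSpace X] {f g : X → ℝ}

lemma IsBddMeas.const (c : ℝ) : IsBddMeas fun _ : X => c :=
  ⟨⟨|c|, fun _ => le_rfl⟩, measurable_const⟩

lemma IsBddMeas.add (hf : IsBddMeas f) (hg : IsBddMeas g) : IsBddMeas fun x => f x + g x :=
  let ⟨⟨C, hC⟩, hfm⟩ := hf
  let ⟨⟨D, hD⟩, hgm⟩ := hg
  ⟨⟨C + D, fun x => (abs_add_le _ _).trans (add_le_add (hC x) (hD x))⟩, hfm.add hgm⟩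

lemma IsBddMeas.const_mul (hf : IsBddMeas f) (c : ℝ) : IsBddMeas fun x => c * f x :=
  let ⟨⟨C, hC⟩, hfm⟩ := hf
  ⟨⟨|c| * C, fun x => (abs_mul c (f x)).trans_le (by gcongr; exact hC x)⟩, hfm.const_mul c⟩

lemma IsBddMeas.sub (hf : IsBddMeas f) (hg : IsBddMeas g) : IsBddMeas fun x => f x - g x := by
  simpa [sub_eq_add_neg] using hf.add (hg.const_mul (-1))

lemma IsBddMeas.comp_measurable (hf : IsBddMeas f) {Y : Type*} [MeasurableSpace Y] {φ : Y → X}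
    (hφ : Measurable φ) :
    IsBddMeas fun x => f (φ x) :=
  let ⟨⟨C, hC⟩, hfm⟩ := hf
  ⟨⟨C, fun x => hC (φ x)⟩, hfm.comp hφ⟩

lemma IsBddMeas.sum {ι : Type*} (s : Finset ι) {k : ι → X → ℝ} (hk : ∀ i ∈ s, IsBddMeas (k i)) :
    IsBddMeas fun x => ∑ i ∈ s, k i x := by
  classical
  induction s using Finset.induction_on with
  | empty => simpa using IsBddMeas.const (X := X) 0
  | insert i s hi ih =>
    simp only [Finset.sum_insert hi]
    exact (hk i (s.mem_insert_self i)).add (ih fun j hj => hk j (Finset.mem_insert_of_mem hj))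

end BddMeas

namespace IsMean

lemma mono {X : Type*} {P Q : (X → ℝ) → Prop} {μ : (X → ℝ) → ℝ} (hμ : IsMean P μ)
    (hQP : ∀ f, Q f → P f) : IsMean Q μ :=
  ⟨hμ.1, fun f hf => hμ.2.1 f (hQP f hf), fun f g hf hg => hμ.2.2.1 f g (hQP f hf) (hQP g hg),
    fun c f hf => hμ.2.2.2 c f (hQP f hf)⟩

variable {X : Type*} [MeasurableSpace X] {μ : (X → ℝ) → ℝ} {f g : X → ℝ}

lemma map_const (hμ : IsMean IsBddMeas μ) (c : ℝ) : μ (fun _ => c) = c := by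
  simpa [hμ.1] using hμ.2.2.2 c _ (IsBddMeas.const 1)

lemma map_sub (hμ : IsMean IsBddMeas μ) (hf : IsBddMeas f) (hg : IsBddMeas g) :
    μ (fun x => f x - g x) = μ f - μ g := by
  have h := hμ.2.2.1 f _ hf (hg.const_mul (-1))
  rw [hμ.2.2.2 (-1) g hg] at h
  simpa [sub_eq_add_neg] using h

lemma map_sum (hμ : IsMean IsBddMeas μ) {ι : Type*} (s : Finset ι) {k : ι → X → ℝ}
    (hk : ∀ i ∈ s, IsBddMeas (k i)) : μ (fun x => ∑ i ∈ s, k i x) = ∑ i ∈ s, μ (k i) := by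
  classical
  induction s using Finset.induction_on with
  | empty => simpa using hμ.map_const 0
  | insert i s hi ih =>
    have hks : ∀ j ∈ s, IsBddMeas (k j) := fun j hj => hk j (Finset.mem_insert_of_mem hj)
    simp only [Finset.sum_insert hi]
    rw [hμ.2.2.1 _ _ (hk i (s.mem_insert_self i)) (IsBddMeas.sum s hks), ih hks]

lemma le_map (hμ : IsMean IsBddMeas μ) (hf : IsBddMeas f) {c : ℝ} (hc : ∀ x, c ≤ f x) :
    c ≤ μ f := by
  have h := hμ.2.1 _ (hf.sub (IsBddMeas.const c)) fun x => sub_nonneg.2 (hc x)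
  rwa [hμ.map_sub hf (IsBddMeas.const c), hμ.map_const, sub_nonneg] at h

end IsMean

section Ultralimit

variable {X : Type*} {U : Ultrafilter (X →₀ ℝ)}

lemma tendsto_limUnder_linearCombination (hU : finsuppStdSimplex X ∈ U) {f : X → ℝ}
    (hf : IsBdd f) :
    Tendsto (linearCombination ℝ f) U (𝓝 (limUnder U (linearCombination ℝ f))) := by
  obtain ⟨C, hC⟩ := hf
  have hbdd : ∀ᶠ a in (U : Filter (X →₀ ℝ)), linearCombination ℝ f a ∈ Set.Icc (-C) C := by
    filter_upwards [hU] with a ha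
    exact abs_le.1 (abs_linearCombination_le_of_mem_finsuppStdSimplex hC ha)
  obtain ⟨L, -, hL⟩ := isCompact_Icc.ultrafilter_le_nhds (U.map _) (le_principal_iff.2 hbdd)
  exact tendsto_nhds_limUnder ⟨L, hL⟩

lemma isMean_limUnder_linearCombination (hU : finsuppStdSimplex X ∈ U) :
    IsMean IsBdd fun f => limUnder (U : Filter (X →₀ ℝ)) (linearCombination ℝ f) := by
  refine ⟨?_, fun f hf hf0 => ?_, fun f g hf hg => ?_, fun c f hf => ?_⟩
  · refine Tendsto.limUnder_eq (tendsto_const_nhds.congr' ?_)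
    filter_upwards [hU] with a ha
    rw [← onenorm_eq_linearCombination_one ha.1, ha.2]
  · refine ge_of_tendsto (tendsto_limUnder_linearCombination hU hf) ?_
    filter_upwards [hU] with a ha
    exact Finset.sum_nonneg fun x _ => mul_nonneg (ha.1 x) (hf0 x)
  · refine Tendsto.limUnder_eq ?_
    refine ((tendsto_limUnder_linearCombination hU hf).add
      (tendsto_limUnder_linearCombination hU hg)).congr fun a => ?_
    exact (linearCombination_add_fun f g a).symm
  · refine Tendsto.limUnder_eq ?_
    refine ((tendsto_limUnder_linearCombination hU hf).const_mul c).congr fun a => ?_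
    exact (linearCombination_const_mul_fun c f a).symm

lemma limUnder_linearCombination_comp_smul {G : Type*} [Group G] [MulAction G X]
    [MeasurableSpace X] (hU : ↑U ≤ reiterFilter G X) {f : X → ℝ} (hf : IsBddMeas f) (g : G) :
    limUnder U (linearCombination ℝ fun x => f (g • x)) = limUnder U (linearCombination ℝ f) := by
  have hlim := (tendsto_limUnder_linearCombination (hU finsuppStdSimplex_mem_reiterFilter)
    hf.1).add ((tendsto_linearCombination_fsAct_sub hf g).mono_left hU)
  rw [add_zero] at hlim
  refine (hlim.congr fun a => ?_).limUnder_eq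
  rw [add_sub_cancel, fsAct_eq_mapDomain, linearCombination_mapDomain]
  rfl

end Ultralimit

theorem exists_invariant_mean_of_reiterSet_nonempty {G X : Type*} [Group G] [MeasurableSpace X]
    [MulAction G X]
    (hR : ∀ Ps : Set (Set X), IsCtblMeasPartition Ps → ∀ (E : Finset G) (ε : ℝ), 0 < ε →
      (reiterSet Ps E ε).Nonempty) :
    ∃ μ : (X → ℝ) → ℝ, IsMean IsBddMeas μ ∧
      ∀ (g : G) (f : X → ℝ), IsBddMeas f → μ (fun x => f (g • x)) = μ f := by
  have := reiterFilter_neBot hR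
  let U := Ultrafilter.of (reiterFilter G X)
  have hU : ↑U ≤ reiterFilter G X := Ultrafilter.of_le _
  exact ⟨_, (isMean_limUnder_linearCombination (hU finsuppStdSimplex_mem_reiterFilter)).mono
    fun f hf => hf.1, fun g f hf => limUnder_linearCombination_comp_smul hU hf g⟩

lemma Convex.exists_dual_pos_of_forall_norm_ge {W : Type*} [NormedAddCommGroup W]
    [NormedSpace ℝ W] {S : Set W} (hS : Convex ℝ S) {ε : ℝ} (hε : 0 < ε)
    (hnorm : ∀ y ∈ S, ε ≤ ‖y‖) : ∃ φ : StrongDual ℝ W, ∃ u > 0, ∀ y ∈ S, u ≤ φ y := by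
  have h0 : (0 : W) ∉ closure S := fun h => by
    have : ε ≤ ‖(0 : W)‖ := closure_minimal hnorm (isClosed_le continuous_const continuous_norm) h
    rw [norm_zero] at this
    linarith
  obtain ⟨φ, u, h0u, hu⟩ := geometric_hahn_banach_point_closed hS.closure isClosed_closure h0
  exact ⟨φ, u, by simpa using h0u, fun y hy => (hu y (subset_closure hy)).le⟩

lemma exists_sum_sub_comp_smul_ge_of_reiterSet_eq_empty {G X : Type*} [Group G] [MulAction G X]
    [MeasurableSpace X] {Ps : Set (Set X)} (hPs : IsCtblMeasPartition Ps) {E : Finset G} {ε : ℝ}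
    (hε : 0 < ε) (hempty : reiterSet Ps E ε = ∅) :
    ∃ h : E → Ps → ℝ, (∃ C, ∀ g P, |h g P| ≤ C) ∧ ∃ u > 0, ∀ x : X,
      u ≤ ∑ g : E, (h g (hPs.piece x) - h g (hPs.piece ((g : G) • x))) := by
  classical
  let Φ : (X →₀ ℝ) →ₗ[ℝ] (E → lp (fun _ : Ps => ℝ) 1) := LinearMap.pi fun g =>
    toL1 ∘ₗ lmapDomain ℝ ℝ hPs.piece ∘ₗ (LinearMap.id - lmapDomain ℝ ℝ ((g : G) • ·))
  have hΦ : ∀ a g, Φ a g = toL1 (mapDomain hPs.piece (a - fsAct (g : G) a)) := fun a g => by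
    simp only [Φ, LinearMap.pi_apply, LinearMap.comp_apply, LinearMap.sub_apply,
      LinearMap.id_apply, lmapDomain_apply, fsAct_eq_mapDomain]
  have hnorm : ∀ y ∈ Φ '' finsuppStdSimplex X, ε ≤ ‖y‖ := by
    rintro _ ⟨a, ha, rfl⟩
    obtain ⟨g, hg, hlt⟩ : ∃ g ∈ E, ε < pnorm Ps (a - fsAct g a) := by
      by_contra! h
      exact (hempty ▸ ⟨ha, h⟩ : a ∈ (∅ : Set (X →₀ ℝ)))
    rw [hPs.pnorm_eq_onenorm_mapDomain, ← norm_toL1, ← hΦ a ⟨g, hg⟩] at hlt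
    exact hlt.le.trans (norm_le_pi_norm (Φ a) ⟨g, hg⟩)
  obtain ⟨φ, u, hu, hφ⟩ :=
    (convex_finsuppStdSimplex.linear_image Φ).exists_dual_pos_of_forall_norm_ge hε hnorm
  refine ⟨fun g P => φ (Pi.single g (toL1 (single P 1))), ⟨‖φ‖, fun g P => ?_⟩, u, hu, fun x => ?_⟩
  · simpa [Pi.norm_single, norm_toL1, onenorm_single] using
      φ.le_opNorm (Pi.single g (toL1 (single P 1)))
  · refine (hφ _ ⟨_, single_one_mem_finsuppStdSimplex x, rfl⟩).trans_eq ?_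
    rw [← Finset.univ_sum_single (Φ (single x 1)), map_sum]
    refine Finset.sum_congr rfl fun g _ => ?_
    rw [hΦ, fsAct_eq_mapDomain, mapDomain_single, mapDomain_sub, mapDomain_single,
      mapDomain_single, map_sub, Pi.single_sub, map_sub]

theorem reiterSet_nonempty_of_invariant_mean {G X : Type*} [Group G] [MeasurableSpace X]
    [MulAction G X] (hmeas : ∀ g : G, Measurable (fun x : X => g • x)) {μ : (X → ℝ) → ℝ}
    (hμ : IsMean IsBddMeas μ)
    (hinv : ∀ (g : G) (f : X → ℝ), IsBddMeas f → μ (fun x => f (g • x)) = μ f)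
    {Ps : Set (Set X)} (hPs : IsCtblMeasPartition Ps) (E : Finset G) {ε : ℝ} (hε : 0 < ε) :
    (reiterSet Ps E ε).Nonempty := by
  rw [Set.nonempty_iff_ne_empty]
  intro hempty
  obtain ⟨h, ⟨C, hC⟩, u, hu, hsum⟩ :=
    exists_sum_sub_comp_smul_ge_of_reiterSet_eq_empty hPs hε hempty
  let H : E → X → ℝ := fun g x => h g (hPs.piece x)
  have hH : ∀ g, IsBddMeas (H g) := fun g =>
    ⟨⟨C, fun x => hC g _⟩, hPs.measurable_comp_piece (h g)⟩
  have hHg : ∀ g : E, IsBddMeas fun x => H g ((g : G) • x) := fun g =>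
    (hH g).comp_measurable (hmeas g)
  have hF : IsBddMeas fun x => ∑ g : E, (H g x - H g ((g : G) • x)) :=
    IsBddMeas.sum _ fun g _ => (hH g).sub (hHg g)
  have hzero : μ (fun x => ∑ g : E, (H g x - H g ((g : G) • x))) = 0 := by
    rw [hμ.map_sum _ fun g _ => (hH g).sub (hHg g)]
    exact Finset.sum_eq_zero fun g _ => by rw [hμ.map_sub (hH g) (hHg g), hinv _ _ (hH g), sub_self]
  linarith [hμ.le_map hF hsum]

theorem invariant_mean_iff_reiter {G X : Type*} [Group G] [MeasurableSpace X] [MulAction G X]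
    (hmeas : ∀ g : G, Measurable (fun x : X => g • x)) :
    (∃ μ : (X → ℝ) → ℝ, IsMean IsBddMeas μ ∧
        ∀ (g : G) (f : X → ℝ), IsBddMeas f → μ (fun x => f (g • x)) = μ f) ↔
    (∀ Ps : Set (Set X), IsCtblMeasPartition Ps → ∀ E : Finset G, ∀ ε : ℝ, 0 < ε →
        ∃ a : X →₀ ℝ, (∀ x, 0 ≤ a x) ∧ onenorm a = 1 ∧
          ∀ g ∈ E, pnorm Ps (a - fsAct g a) ≤ ε) := by
  constructor
  · rintro ⟨μ, hμ, hinv⟩ Ps hPs E ε hε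
    obtain ⟨a, ⟨ha₀, ha₁⟩, ha⟩ := reiterSet_nonempty_of_invariant_mean hmeas hμ hinv hPs E hε
    exact ⟨a, ha₀, ha₁, ha⟩
  · intro hR
    refine exists_invariant_mean_of_reiterSet_nonempty fun Ps hPs E ε hε => ?_
    obtain ⟨a, ha₀, ha₁, ha⟩ := hR Ps hPs E ε hε
    exact ⟨a, ⟨ha₀, ha₁⟩, ha⟩
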